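/- arXiv:2108.13662 — 3 statements merged into one kernel-verified Lean document; each statement's English description precedes it below -/
import Mathlib

section
/- Every perfect 4-sequence covering array of [n] (n ≥ 4) is a perfect separating family of K_n. -/
open scoped Classical

set_option maxHeartbeats 1000000

/-- `σ` separates the disjoint edges `{a,b}` and `{c,d}` of `K_n`. -/
def Separates {n : ℕ} (σ : Equiv.Perm (Fin n)) (a b c d : Fin n) : Prop :=
  (max (σ.symm a) (σ.symm b) < min (σ.symm c) (σ.symm d)) ∨
  (max (σ.symm c) (σ.symm d) < min (σ.symm a) (σ.symm b))

/-- `F` is a perfect separating family of `K_n` with multiplicity `lam`. -/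
def IsPerfectSepFamily (n : ℕ) (F : Multiset (Equiv.Perm (Fin n))) (lam : ℕ) : Prop :=
  ∀ a b c d : Fin n, a ≠ b → c ≠ d → a ≠ c → a ≠ d → b ≠ c → b ≠ d →
    Multiset.countP (fun σ => Separates σ a b c d) F = lam

/-- `T` is a perfect `k`-sequence covering array of `[n]` with multiplicity `t`. -/
def IsPerfectSCA (n k : ℕ) (T : Multiset (Equiv.Perm (Fin n))) (t : ℕ) : Prop :=
  ∀ a : Fin k → Fin n, Function.Injective a →
    Multiset.countP (fun σ => ∀ i j : Fin k, i < j → σ.symm (a i) < σ.symm (a j)) T = t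

/-- `a, b, c, d` appear in this order in `σ`. -/
def Chain4 {n : ℕ} (σ : Equiv.Perm (Fin n)) (a b c d : Fin n) : Prop :=
  σ.symm a < σ.symm b ∧ σ.symm b < σ.symm c ∧ σ.symm c < σ.symm d

/-- countP of a disjoint disjunction. -/
lemma countP_or_disj {α : Type*} (s : Multiset α) (p q r : α → Prop)
    [DecidablePred p] [DecidablePred q] [DecidablePred r]
    (hr : ∀ x, r x ↔ (p x ∨ q x)) (h : ∀ x, ¬(p x ∧ q x)) :
    Multiset.countP r s = Multiset.countP p s + Multiset.countP q s := by
  have e : Multiset.countP r s = Multiset.countP (fun x => p x ∨ q x) s :=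
    Multiset.countP_congr rfl fun x _ => propext (hr x)
  rw [e]; clear e
  induction s using Multiset.induction with
  | empty => simp
  | cons a s ih =>
    by_cases hp : p a <;> by_cases hq : q a <;>
      simp [Multiset.countP_cons, hp, hq, ih] <;> first
        | exact (h a ⟨hp, hq⟩).elim
        | omega

lemma inj4 {n : ℕ} {a b c d : Fin n} (hab : a ≠ b) (hcd : c ≠ d) (hac : a ≠ c)
    (had : a ≠ d) (hbc : b ≠ c) (hbd : b ≠ d) : Function.Injective ![a, b, c, d] := by
  intro i j hij
  fin_cases i <;> fin_cases j <;> simp_all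

lemma chain_count {n t : ℕ} {T : Multiset (Equiv.Perm (Fin n))} (hT : IsPerfectSCA n 4 T t)
    {a b c d : Fin n} (hab : a ≠ b) (hcd : c ≠ d) (hac : a ≠ c)
    (had : a ≠ d) (hbc : b ≠ c) (hbd : b ≠ d) :
    Multiset.countP (fun σ => Chain4 σ a b c d) T = t := by
  have h := hT ![a, b, c, d] (inj4 hab hcd hac had hbc hbd)
  rw [← h]
  refine Multiset.countP_congr rfl fun σ _ => propext ?_
  unfold Chain4
  constructor
  · rintro ⟨h1, h2, h3⟩ i j hij
    fin_cases i <;> fin_cases j <;>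
      simp only [Matrix.cons_val_zero, Matrix.cons_val_one, Matrix.head_cons,
        Matrix.cons_val_two, Matrix.tail_cons, Matrix.cons_val_three, Matrix.cons_val_fin_one,
        Fin.mk_lt_mk] <;>
      first
        | exact absurd hij (by decide)
        | exact h1
        | exact h2
        | exact h3
        | exact h1.trans h2
        | exact h2.trans h3
        | exact (h1.trans h2).trans h3
  · intro h
    have h1 := h 0 1 (by decide)
    have h2 := h 1 2 (by decide)
    have h3 := h 2 3 (by decide)
    simp only [Matrix.cons_val_zero, Matrix.cons_val_one, Matrix.head_cons,
      Matrix.cons_val_two, Matrix.tail_cons, Matrix.cons_val_three] at h1 h2 h3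
    exact ⟨h1, h2, h3⟩

theorem stmt_4 (n t : ℕ) (hn : 4 ≤ n) (ht : 0 < t) (T : Multiset (Equiv.Perm (Fin n)))
    (hT : IsPerfectSCA n 4 T t) :
    ∃ lam : ℕ, 0 < lam ∧ IsPerfectSepFamily n T lam := by
  refine ⟨8 * t, by omega, ?_⟩
  intro a b c d hab hcd hac had hbc hbd
  have key : ∀ σ : Equiv.Perm (Fin n), Separates σ a b c d = (Chain4 σ a b c d ∨ Chain4 σ a b d c ∨ Chain4 σ b a c d ∨ Chain4 σ b a d c ∨ Chain4 σ c d a b ∨ Chain4 σ c d b a ∨ Chain4 σ d c a b ∨ Chain4 σ d c b a) := by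
    intro σ
    have h1 : σ.symm a ≠ σ.symm b := fun h => hab (σ.symm.injective h)
    have h2 : σ.symm c ≠ σ.symm d := fun h => hcd (σ.symm.injective h)
    rw [Fin.ne_iff_vne] at h1 h2
    apply propext
    simp only [Separates, Chain4, max_lt_iff, lt_min_iff, Fin.lt_def]
    omega
  have hcongr : Multiset.countP (fun σ => Separates σ a b c d) T =
      Multiset.countP (fun σ => Chain4 σ a b c d ∨ Chain4 σ a b d c ∨ Chain4 σ b a c d ∨ Chain4 σ b a d c ∨ Chain4 σ c d a b ∨ Chain4 σ c d b a ∨ Chain4 σ d c a b ∨ Chain4 σ d c b a) T :=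
    Multiset.countP_congr rfl fun σ _ => key σ
  rw [hcongr]
  rw [countP_or_disj T (fun σ => Chain4 σ a b c d) (fun σ => Chain4 σ a b d c ∨ Chain4 σ b a c d ∨ Chain4 σ b a d c ∨ Chain4 σ c d a b ∨ Chain4 σ c d b a ∨ Chain4 σ d c a b ∨ Chain4 σ d c b a) (fun σ => Chain4 σ a b c d ∨ Chain4 σ a b d c ∨ Chain4 σ b a c d ∨ Chain4 σ b a d c ∨ Chain4 σ c d a b ∨ Chain4 σ c d b a ∨ Chain4 σ d c a b ∨ Chain4 σ d c b a) (fun _ => Iff.rfl) (by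
    rintro σ ⟨h1, h2⟩
    simp only [Chain4, Fin.lt_def] at h1 h2
    omega)]
  rw [countP_or_disj T (fun σ => Chain4 σ a b d c) (fun σ => Chain4 σ b a c d ∨ Chain4 σ b a d c ∨ Chain4 σ c d a b ∨ Chain4 σ c d b a ∨ Chain4 σ d c a b ∨ Chain4 σ d c b a) (fun σ => Chain4 σ a b d c ∨ Chain4 σ b a c d ∨ Chain4 σ b a d c ∨ Chain4 σ c d a b ∨ Chain4 σ c d b a ∨ Chain4 σ d c a b ∨ Chain4 σ d c b a) (fun _ => Iff.rfl) (by
    rintro σ ⟨h1, h2⟩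
    simp only [Chain4, Fin.lt_def] at h1 h2
    omega)]
  rw [countP_or_disj T (fun σ => Chain4 σ b a c d) (fun σ => Chain4 σ b a d c ∨ Chain4 σ c d a b ∨ Chain4 σ c d b a ∨ Chain4 σ d c a b ∨ Chain4 σ d c b a) (fun σ => Chain4 σ b a c d ∨ Chain4 σ b a d c ∨ Chain4 σ c d a b ∨ Chain4 σ c d b a ∨ Chain4 σ d c a b ∨ Chain4 σ d c b a) (fun _ => Iff.rfl) (by
    rintro σ ⟨h1, h2⟩
    simp only [Chain4, Fin.lt_def] at h1 h2
    omega)]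
  rw [countP_or_disj T (fun σ => Chain4 σ b a d c) (fun σ => Chain4 σ c d a b ∨ Chain4 σ c d b a ∨ Chain4 σ d c a b ∨ Chain4 σ d c b a) (fun σ => Chain4 σ b a d c ∨ Chain4 σ c d a b ∨ Chain4 σ c d b a ∨ Chain4 σ d c a b ∨ Chain4 σ d c b a) (fun _ => Iff.rfl) (by
    rintro σ ⟨h1, h2⟩
    simp only [Chain4, Fin.lt_def] at h1 h2
    omega)]
  rw [countP_or_disj T (fun σ => Chain4 σ c d a b) (fun σ => Chain4 σ c d b a ∨ Chain4 σ d c a b ∨ Chain4 σ d c b a) (fun σ => Chain4 σ c d a b ∨ Chain4 σ c d b a ∨ Chain4 σ d c a b ∨ Chain4 σ d c b a) (fun _ => Iff.rfl) (by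
    rintro σ ⟨h1, h2⟩
    simp only [Chain4, Fin.lt_def] at h1 h2
    omega)]
  rw [countP_or_disj T (fun σ => Chain4 σ c d b a) (fun σ => Chain4 σ d c a b ∨ Chain4 σ d c b a) (fun σ => Chain4 σ c d b a ∨ Chain4 σ d c a b ∨ Chain4 σ d c b a) (fun _ => Iff.rfl) (by
    rintro σ ⟨h1, h2⟩
    simp only [Chain4, Fin.lt_def] at h1 h2
    omega)]
  rw [countP_or_disj T (fun σ => Chain4 σ d c a b) (fun σ => Chain4 σ d c b a) (fun σ => Chain4 σ d c a b ∨ Chain4 σ d c b a) (fun _ => Iff.rfl) (by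
    rintro σ ⟨h1, h2⟩
    simp only [Chain4, Fin.lt_def] at h1 h2
    omega)]
  rw [chain_count hT hab hcd hac had hbc hbd,
    chain_count hT hab (Ne.symm hcd) had hac hbd hbc,
    chain_count hT (Ne.symm hab) hcd hbc hbd hac had,
    chain_count hT (Ne.symm hab) (Ne.symm hcd) hbd hbc had hac,
    chain_count hT hcd hab (Ne.symm hac) (Ne.symm hbc) (Ne.symm had) (Ne.symm hbd),
    chain_count hT hcd (Ne.symm hab) (Ne.symm hbc) (Ne.symm hac) (Ne.symm hbd) (Ne.symm had),
    chain_count hT (Ne.symm hcd) hab (Ne.symm had) (Ne.symm hbd) (Ne.symm hac) (Ne.symm hbc),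
    chain_count hT (Ne.symm hcd) (Ne.symm hab) (Ne.symm hbd) (Ne.symm had) (Ne.symm hbc) (Ne.symm hac)]
  omega
end

section
/- The set of three permutations {1234, 1432, 4213} (one-line notation) is a perfect separating family of K_4 with multiplicity 1; in particular PSD(K_4) ≤ 3. -/
open scoped Classical

/-- The perfect separation dimension of `K_n`: the minimum size of a perfect separating
family of `K_n`. -/
noncomputable def PSD (n : ℕ) : ℕ :=
  sInf {m | ∃ F : Multiset (Equiv.Perm (Fin n)), ∃ lam : ℕ,
    Multiset.card F = m ∧ 0 < lam ∧ IsPerfectSepFamily n F lam}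

/-- one-line notation `1234`. -/
noncomputable def p1234 : Equiv.Perm (Fin 4) := Equiv.ofBijective ![0, 1, 2, 3] (by decide)
/-- one-line notation `1432`. -/
noncomputable def p1432 : Equiv.Perm (Fin 4) := Equiv.ofBijective ![0, 3, 2, 1] (by decide)
/-- one-line notation `4213`. -/
noncomputable def p4213 : Equiv.Perm (Fin 4) := Equiv.ofBijective ![3, 1, 0, 2] (by decide)

/-! A permutation of four points separates exactly one pair of disjoint edges of `K_4`: the edge
on its first two entries against the edge on its last two. The permutations `1234`, `1432`,
`4213` realise the three different pairs `12|34`, `14|23`, `24|13`. -/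

instance Separates.decidable {n : ℕ} (σ : Equiv.Perm (Fin n)) (a b c d : Fin n) :
    Decidable (Separates σ a b c d) :=
  inferInstanceAs (Decidable (_ ∨ _))

/-- `IsPerfectSepFamily` counts with the classical `DecidablePred` instance; this restates it
with `Separates.decidable`, so that concrete instances can be evaluated by `decide`. -/
theorem isPerfectSepFamily_iff {n : ℕ} (F : Multiset (Equiv.Perm (Fin n))) (lam : ℕ) :
    IsPerfectSepFamily n F lam ↔ ∀ a b c d : Fin n, a ≠ b → c ≠ d → a ≠ c → a ≠ d → b ≠ c →
      b ≠ d → F.countP (fun σ => Separates σ a b c d) = lam := by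
  unfold IsPerfectSepFamily
  congr!

theorem p1234_eq_one : p1234 = 1 := Equiv.ext <| by decide

theorem p1432_eq_swap : p1432 = Equiv.swap 1 3 := Equiv.ext <| by decide

theorem p4213_eq_swap_mul_swap : p4213 = Equiv.swap 0 2 * Equiv.swap 0 3 :=
  Equiv.ext <| by decide

theorem isPerfectSepFamily_p1234_p1432_p4213 : IsPerfectSepFamily 4 {p1234, p1432, p4213} 1 := by
  rw [isPerfectSepFamily_iff, p1234_eq_one, p1432_eq_swap, p4213_eq_swap_mul_swap]
  -- at the default `synthInstance.maxSize` the search for the nested binders gives up and falls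
  -- back on `Classical.propDecidable`, which `decide` cannot evaluate
  set_option synthInstance.maxSize 512 in decide

theorem stmt_7 :
    IsPerfectSepFamily 4 {p1234, p1432, p4213} 1 ∧ PSD 4 ≤ 3 :=
  ⟨isPerfectSepFamily_p1234_p1432_p4213,
    Nat.sInf_le ⟨_, 1, rfl, one_pos, isPerfectSepFamily_p1234_p1432_p4213⟩⟩
end

section
/- Let G be a graph on n vertices such that every two disjoint vertex sets of size t = ⌈3·log₂(n)/p⌉ are joined by an edge (with 0 < p < 1). Then every vertex set X with |X| ≥ 9·log₂(n)/p contains a subset of size at least |X|/3 inducing a connected subgraph of G. -/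
theorem stmt_16 (n : ℕ) (p : ℝ) (hp0 : 0 < p) (hp1 : p < 1) (G : SimpleGraph (Fin n))
    (hjoin : ∀ A B : Finset (Fin n),
      A.card = ⌈3 * Real.logb 2 n / p⌉₊ → B.card = ⌈3 * Real.logb 2 n / p⌉₊ →
      Disjoint A B → ∃ a ∈ A, ∃ b ∈ B, G.Adj a b)
    (X : Finset (Fin n)) (hX : 9 * Real.logb 2 n / p ≤ (X.card : ℝ)) :
    ∃ Y : Finset (Fin n), Y ⊆ X ∧ (X.card : ℝ) / 3 ≤ (Y.card : ℝ) ∧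
      (G.induce (Y : Set (Fin n))).Connected := by
  classical
  set t := ⌈3 * Real.logb 2 n / p⌉₊ with ht
  -- any set whose triple covers X has card ≥ t
  have hle : ∀ Z : Finset (Fin n), X.card ≤ 3 * Z.card → t ≤ Z.card := by
    intro Z hZ
    rw [ht, Nat.ceil_le]
    have hZ' : (X.card : ℝ) ≤ 3 * Z.card := by exact_mod_cast hZ
    have h9 : 9 * Real.logb 2 n / p = 3 * (3 * Real.logb 2 n / p) := by ring
    rw [h9] at hX
    linarith
  set P : Finset (Fin n) → Prop := fun Y =>
    Y ⊆ X ∧ (∀ a ∈ Y, ∀ b ∈ X \ Y, ¬ G.Adj a b) ∧ X.card ≤ 3 * Y.card with hP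
  have hXP : P X := ⟨Finset.Subset.refl X, by simp, by omega⟩
  obtain ⟨Y, hYS, hYmin⟩ := Finset.exists_min_image (X.powerset.filter P) Finset.card
    ⟨X, by rw [Finset.mem_filter, Finset.mem_powerset]; exact ⟨Finset.Subset.refl X, hXP⟩⟩
  rw [Finset.mem_filter, Finset.mem_powerset] at hYS
  obtain ⟨hYsub, _, hYclosed, hYcard⟩ := hYS
  have hYX : Y.card ≤ X.card := Finset.card_le_card hYsub
  -- case A : |Y| ≤ 2|X|/3 is impossible
  have hcaseA : ¬ (3 * Y.card ≤ 2 * X.card) := by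
    intro h
    have h1 : t ≤ Y.card := hle Y hYcard
    have h2 : t ≤ (X \ Y).card := by
      apply hle
      rw [Finset.card_sdiff_of_subset hYsub]
      omega
    obtain ⟨A, hA, hAcard⟩ := Finset.exists_subset_card_eq h1
    obtain ⟨B, hB, hBcard⟩ := Finset.exists_subset_card_eq h2
    obtain ⟨a, ha, b, hb, hab⟩ := hjoin A B hAcard hBcard
      (Finset.disjoint_sdiff.mono hA hB)
    exact hYclosed a (hA ha) b (hB hb) hab
  have h2X : 2 * X.card < 3 * Y.card := by omega
  have hYpos : 0 < Y.card := by omega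
  obtain ⟨v, hv⟩ := Finset.card_pos.mp hYpos
  set H := G.induce (Y : Set (Fin n)) with hH
  have hv' : v ∈ (Y : Set (Fin n)) := Finset.mem_coe.mpr hv
  set v' : (Y : Set (Fin n)) := ⟨v, hv'⟩ with hv'def
  set C := Y.filter (fun x => ∃ hx : x ∈ (Y : Set (Fin n)), H.Reachable v' ⟨x, hx⟩) with hC
  have hCsub : C ⊆ Y := Finset.filter_subset _ _
  have hvC : v ∈ C := by
    rw [hC, Finset.mem_filter]
    exact ⟨hv, hv', SimpleGraph.Reachable.refl _⟩
  -- key : C is closed towards Y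
  have hkey : ∀ a ∈ C, ∀ b ∈ Y, G.Adj a b → b ∈ C := by
    intro a haC b hbY hab
    rw [hC, Finset.mem_filter] at haC ⊢
    obtain ⟨haY, hxa, hra⟩ := haC
    have hbY' : b ∈ (Y : Set (Fin n)) := Finset.mem_coe.mpr hbY
    have hadj : H.Adj ⟨a, hxa⟩ ⟨b, hbY'⟩ := by
      simp only [hH, SimpleGraph.comap_adj, Function.Embedding.coe_subtype]
      exact hab
    exact ⟨hbY, hbY', hra.trans hadj.reachable⟩
  by_cases hCc : X.card ≤ 3 * C.card
  · -- C is a valid closed set; minimality gives C = Y, hence Y connected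
    have hCP : P C := by
      refine ⟨hCsub.trans hYsub, ?_, hCc⟩
      intro a haC b hb hab
      rw [Finset.mem_sdiff] at hb
      obtain ⟨hbX, hbC⟩ := hb
      by_cases hbY : b ∈ Y
      · exact hbC (hkey a haC b hbY hab)
      · exact hYclosed a (hCsub haC) b (Finset.mem_sdiff.mpr ⟨hbX, hbY⟩) hab
    have hYleC : Y.card ≤ C.card := hYmin C (by
      rw [Finset.mem_filter, Finset.mem_powerset]
      exact ⟨hCsub.trans hYsub, hCP⟩)
    have hCY : C = Y := Finset.eq_of_subset_of_card_le hCsub hYleC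
    refine ⟨Y, hYsub, ?_, ?_⟩
    · have : (X.card : ℝ) ≤ 3 * Y.card := by exact_mod_cast hYcard
      linarith
    · rw [SimpleGraph.connected_iff]
      have hreach : ∀ x : (Y : Set (Fin n)), H.Reachable v' x := by
        intro x
        have hxY : (x : Fin n) ∈ Y := Finset.mem_coe.mp x.2
        have hxC : (x : Fin n) ∈ C := by rw [hCY]; exact hxY
        rw [hC, Finset.mem_filter] at hxC
        obtain ⟨_, hx2, hr⟩ := hxC
        have : (⟨(x : Fin n), hx2⟩ : (Y : Set (Fin n))) = x := Subtype.ext rfl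
        rwa [this] at hr
      exact ⟨fun x y => (hreach x).symm.trans (hreach y), ⟨v'⟩⟩
  · -- D = Y \ C is a smaller valid closed set : contradiction
    exfalso
    set D := Y \ C with hD
    have hDcard : D.card = Y.card - C.card := Finset.card_sdiff_of_subset hCsub
    have hCcard : C.card ≤ Y.card := Finset.card_le_card hCsub
    have hCpos : 0 < C.card := Finset.card_pos.mpr ⟨v, hvC⟩
    have hDP : P D := by
      refine ⟨(Finset.sdiff_subset).trans hYsub, ?_, by omega⟩
      intro a haD b hb hab
      rw [Finset.mem_sdiff] at haD hb
      obtain ⟨haY, haC⟩ := haD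
      obtain ⟨hbX, hbD⟩ := hb
      by_cases hbY : b ∈ Y
      · by_cases hbC : b ∈ C
        · exact haC (hkey b hbC a haY hab.symm)
        · exact hbD (Finset.mem_sdiff.mpr ⟨hbY, hbC⟩)
      · exact hYclosed a haY b (Finset.mem_sdiff.mpr ⟨hbX, hbY⟩) hab
    have hYleD : Y.card ≤ D.card := hYmin D (by
      rw [Finset.mem_filter, Finset.mem_powerset]
      exact ⟨(Finset.sdiff_subset).trans hYsub, hDP⟩)
    omega
end
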